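/- (Strategy Preservation) Let G be a MAGIIAN and G^K its MKBSC expansion, and assume G^K fulfills the PDK condition. Let R be an observable reachability objective in G and R^K its translation for G^K. If there is a winning profile of observation-based perfect-recall strategies in G for R, then there is also a winning profile of observation-based perfect-recall strategies in G^K for R^K. Concretely, if {α_i}_{i∈Agt} with α_i : Obs_i^+ → Act_i is winning for R in G, then the profile {α_i ∘ ob_i}_{i∈Agt} is winning for R^K in G^K, where for each observation o^K_i ∈ Obs^K_i with common i-th component A, ob_i(o^K_i) is the unique o_i ∈ Obs_i with A ⊆ o_i, lifted to sequences. -/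
import Mathlib


open Set

/-- A multi-agent game with imperfect information against Nature (MAGIIAN).
`obs i l` is the observation block of agent `i` containing location `l`;
the axioms make the blocks of each agent a partition of the locations. -/
structure MAGIIAN (Agt Loc : Type) (Act : Agt → Type) where
  init : Loc
  trans : Loc → (∀ i, Act i) → Loc → Prop
  obs : Agt → Loc → Set Loc
  obs_mem : ∀ i l, l ∈ obs i l
  obs_eq : ∀ i l l', l' ∈ obs i l → obs i l' = obs i l

namespace MAGIIAN

variable {Agt Loc : Type} {Act : Agt → Type}

/-- `o` is an observation (block) of agent `i` in `G`. -/
def IsObs (G : MAGIIAN Agt Loc Act) (i : Agt) (o : Set Loc) : Prop :=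
  ∃ l, o = G.obs i l

/-- Transition relation `Δ_i` of the projection `G|_i`. -/
def projTrans (G : MAGIIAN Agt Loc Act) (i : Agt) (l : Loc) (a : Act i) (l' : Loc) : Prop :=
  ∃ σ : ∀ j, Act j, σ i = a ∧ G.trans l σ l'

/-- Transition relation `Δ^K_i` of the individual KBSC expansion `(G|_i)^K`. -/
def kTrans (G : MAGIIAN Agt Loc Act) (i : Agt) (s : Set Loc) (a : Act i) (s' : Set Loc) : Prop :=
  ∃ o : Set Loc, G.IsObs i o ∧ s' = {l' ∈ o | ∃ l ∈ s, G.projTrans i l a l'} ∧ s'.Nonempty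

/-- Pruned joint transition relation `Δ^K` of the MKBSC expansion `G^K`
(unrealisable transitions are removed). -/
def kTransJ (G : MAGIIAN Agt Loc Act) (s : Agt → Set Loc) (σ : ∀ i, Act i)
    (s' : Agt → Set Loc) : Prop :=
  (∀ i, G.kTrans i (s i) (σ i) (s' i)) ∧
    ∃ l ∈ (⋂ i, s i), ∃ l' ∈ (⋂ i, s' i), G.trans l σ l'

/-- The MKBSC expansion `G^K`, as a MAGIIAN over joint knowledge states;
agent `i`'s observation of a joint knowledge state is determined by its `i`-th component. -/
def expand (G : MAGIIAN Agt Loc Act) : MAGIIAN Agt (Agt → Set Loc) Act where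
  init := fun _ => {G.init}
  trans := G.kTransJ
  obs := fun i s => {s' | s' i = s i}
  obs_mem := fun _ _ => rfl
  obs_eq := by
    intro i s s' h
    simp only [Set.mem_setOf_eq] at h
    ext t
    simp [Set.mem_setOf_eq, h]

/-- Reachability from the initial location. -/
def Reachable (G : MAGIIAN Agt Loc Act) (l : Loc) : Prop :=
  Relation.ReflTransGen (fun x y => ∃ σ, G.trans x σ y) G.init l

/-- The MKBSC expansion `G^K` fulfills the perfect-distributed-knowledge (PDK) condition:
every reachable joint knowledge state has singleton component intersection. -/
def PDK (G : MAGIIAN Agt Loc Act) : Prop :=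
  ∀ s : Agt → Set Loc, G.expand.Reachable s → ∃ l : Loc, (⋂ i, s i) = {l}

/-- A full play, given as its sequences of locations and of joint actions. -/
def IsPlay (G : MAGIIAN Agt Loc Act) (l : ℕ → Loc) (σ : ℕ → ∀ i, Act i) : Prop :=
  l 0 = G.init ∧ ∀ k, G.trans (l k) (σ k) (l (k + 1))

/-- Observation history of agent `i` (list of observation blocks) up to time `k`. -/
def obsHist (G : MAGIIAN Agt Loc Act) (i : Agt) (l : ℕ → Loc) (k : ℕ) : List (Set Loc) :=
  (List.range (k + 1)).map fun j => G.obs i (l j)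

/-- Outcomes (location sequences) of a profile of observation-based
perfect-recall strategies. -/
def PROutcome (G : MAGIIAN Agt Loc Act) (α : ∀ i, List (Set Loc) → Act i)
    (l : ℕ → Loc) : Prop :=
  ∃ σ : ℕ → ∀ i, Act i, G.IsPlay l σ ∧ ∀ k i, σ k i = α i (G.obsHist i l k)

/-- Outcomes of a profile of observation-based memoryless strategies. -/
def MLOutcome (G : MAGIIAN Agt Loc Act) (α : ∀ i, Set Loc → Act i) (l : ℕ → Loc) : Prop :=
  ∃ σ : ℕ → ∀ i, Act i, G.IsPlay l σ ∧ ∀ k i, σ k i = α i (G.obs i (l k))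

/-- A play is winning for an observable reachability objective `R` iff some
agent at some point observes an observation in `R`. -/
def WinsReach (G : MAGIIAN Agt Loc Act) (R : Set (Set Loc)) (l : ℕ → Loc) : Prop :=
  ∃ i k, G.obs i (l k) ∈ R

/-- A play is winning for an observable safety objective `F` iff at every point
some agent observes an observation in `F`. -/
def WinsSafe (G : MAGIIAN Agt Loc Act) (F : Set (Set Loc)) (l : ℕ → Loc) : Prop :=
  ∀ k, ∃ i, G.obs i (l k) ∈ F

/-- `ob_i`: maps an observation block of `G^K` for agent `i` (all of whose members have the
same `i`-th component `A`) to the unique observation of `i` in `G` that includes `A`. -/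
def obMap (G : MAGIIAN Agt Loc Act) (i : Agt) (O : Set (Agt → Set Loc)) : Set Loc :=
  ⋃ s ∈ O, ⋃ l ∈ s i, G.obs i l

/-- The translated objective `R^K = {s ∈ S : ∃ i, ∃ o ∈ R ∩ Obs_i, s i ⊆ o}`,
as a set of joint knowledge states. -/
def transObj (G : MAGIIAN Agt Loc Act) (R : Set (Set Loc)) : Set (Agt → Set Loc) :=
  {s | ∃ i, ∃ o ∈ R, G.IsObs i o ∧ s i ⊆ o}

end MAGIIAN


namespace MAGIIAN

variable {Agt Loc : Type} {Act : Agt → Type}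

/-- Strategy Preservation: if `G^K` fulfills the PDK condition and the profile
`{α_i}` of observation-based perfect-recall strategies is winning in `G` for the
observable reachability objective `R`, then the profile `{α_i ∘ ob_i}` is winning
in `G^K` for the translated objective `R^K` (i.e. each of its outcomes in `G^K`
visits a state of `R^K`). -/
theorem strategy_preservation_reach (G : MAGIIAN Agt Loc Act) (hPDK : G.PDK)
    (R : Set (Set Loc)) (hR : ∀ o ∈ R, ∃ i, G.IsObs i o)
    (α : ∀ i, List (Set Loc) → Act i)
    (hwin : ∀ l, G.PROutcome α l → G.WinsReach R l) :
    ∀ s : ℕ → Agt → Set Loc,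
      G.expand.PROutcome (fun i hist => α i (hist.map (G.obMap i))) s →
      ∃ k, s k ∈ G.transObj R := by
  rintro s ⟨σ, ⟨h0, hstep⟩, hstrat⟩
  -- every s k is reachable in the expansion
  have hreach : ∀ k, G.expand.Reachable (s k) := by
    intro k
    induction k with
    | zero => rw [h0]; exact Relation.ReflTransGen.refl
    | succ k ih =>
      exact Relation.ReflTransGen.tail ih ⟨σ k, hstep k⟩
  have hsing : ∀ k, ∃ x, (⋂ i, s k i) = {x} := fun k => hPDK _ (hreach k)
  choose l hl using hsing
  have hlmem : ∀ k i, l k ∈ s k i := by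
    intro k i
    have : l k ∈ ⋂ i, s k i := by rw [hl k]; exact rfl
    exact Set.mem_iInter.mp this i
  have hl0 : l 0 = G.init := by
    have h1 : G.init ∈ ⋂ i, s 0 i := by
      refine Set.mem_iInter.mpr fun i => ?_
      have : s 0 i = {G.init} := congrFun h0 i
      rw [this]; exact rfl
    rw [hl 0] at h1
    exact h1.symm
  -- block property: all members of s k i share the observation of l k
  have hblock : ∀ k i m, m ∈ s k i → G.obs i m = G.obs i (l k) := by
    intro k
    induction k with
    | zero =>
      intro i m hm
      have : s 0 i = {G.init} := congrFun h0 i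
      rw [this] at hm
      have hm' : m = G.init := hm
      rw [hm', ← hl0]
    | succ k ih =>
      intro i m hm
      obtain ⟨o, ⟨w, hw⟩, hs', _⟩ := (hstep k).1 i
      have hmo : m ∈ o := by rw [hs'] at hm; exact hm.1
      have hlo : l (k + 1) ∈ o := by
        have := hlmem (k + 1) i
        rw [hs'] at this; exact this.1
      rw [hw] at hmo hlo
      rw [G.obs_eq i w m hmo, ← G.obs_eq i w (l (k + 1)) hlo]
  -- extracted play
  have htrans : ∀ k, G.trans (l k) (σ k) (l (k + 1)) := by
    intro k
    obtain ⟨a, ha, b, hb, hab⟩ := (hstep k).2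
    rw [hl k] at ha; rw [hl (k + 1)] at hb
    rw [Set.mem_singleton_iff] at ha hb
    rwa [ha, hb] at hab
  -- the observation histories match under obMap
  have hobs : ∀ j i, G.obMap i (G.expand.obs i (s j)) = G.obs i (l j) := by
    intro j i
    ext x
    constructor
    · intro hx
      simp only [obMap, Set.mem_iUnion] at hx
      obtain ⟨s', hs', m, hm, hxm⟩ := hx
      have h1 : s' i = s j i := hs'
      rw [h1] at hm
      rwa [hblock j i m hm] at hxm
    · intro hx
      simp only [obMap, Set.mem_iUnion]
      exact ⟨s j, rfl, l j, hlmem j i, hx⟩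
  have hhist : ∀ k i, (G.expand.obsHist i s k).map (G.obMap i) = G.obsHist i l k := by
    intro k i
    simp only [obsHist, List.map_map]
    exact List.map_congr_left fun j _ => hobs j i
  have houtcome : G.PROutcome α l := by
    refine ⟨σ, ⟨hl0, htrans⟩, fun k i => ?_⟩
    rw [hstrat k i]; exact congrArg (α i) (hhist k i)
  obtain ⟨i, k, hRk⟩ := hwin l houtcome
  refine ⟨k, i, G.obs i (l k), hRk, ⟨l k, rfl⟩, fun m hm => ?_⟩
  rw [← hblock k i m hm]
  exact G.obs_mem i m

end MAGIIAN
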